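/- arXiv:2111.10919 — 4 statements merged into one kernel-verified Lean document; each statement's English description precedes it below -/
import Mathlib

section
/- For any θ, α, β ∈ (0,1), defining φ(θ,α,β) := θ²·((β−α)²/(θ(β−α)+1−β) + (θ(β−α)+α)/(θ(1−θ))), we have θ²·|α−β| ≤ φ(θ,α,β) ≤ (θ/(1−θ))·max{α,β} ≤ θ/(1−θ). -/
theorem phi_bounds (θ α β : ℝ) (hθ : θ ∈ Set.Ioo (0:ℝ) 1)
    (hα : α ∈ Set.Ioo (0:ℝ) 1) (hβ : β ∈ Set.Ioo (0:ℝ) 1) :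
    θ ^ 2 * |α - β| ≤
        θ ^ 2 * ((β - α) ^ 2 / (θ * (β - α) + 1 - β)
          + (θ * (β - α) + α) / (θ * (1 - θ))) ∧
      θ ^ 2 * ((β - α) ^ 2 / (θ * (β - α) + 1 - β)
          + (θ * (β - α) + α) / (θ * (1 - θ))) ≤ θ / (1 - θ) * max α β ∧
      θ / (1 - θ) * max α β ≤ θ / (1 - θ) := by
  obtain ⟨hθ0, hθ1⟩ := hθ
  obtain ⟨hα0, hα1⟩ := hα
  obtain ⟨hβ0, hβ1⟩ := hβ
  have h1θ : (0:ℝ) < 1 - θ := by linarith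
  have hD : (0:ℝ) < θ * (β - α) + 1 - β := by nlinarith [mul_pos h1θ (show (0:ℝ) < 1 - β by linarith), mul_pos hθ0 (show (0:ℝ) < 1 - α by linarith)]
  have hθθ : (0:ℝ) < θ * (1 - θ) := by positivity
  refine ⟨?_, ?_, ?_⟩
  · have habs : |α - β| ≤ α + β := by
      rw [abs_le]; constructor <;> linarith
    have h2 : α + β ≤ (θ * (β - α) + α) / (θ * (1 - θ)) := by
      rw [le_div_iff₀ hθθ]
      nlinarith [mul_nonneg (sq_nonneg θ) hβ0.le, mul_nonneg (sq_nonneg (1 - θ)) hα0.le]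
    have h3 : (0:ℝ) ≤ (β - α) ^ 2 / (θ * (β - α) + 1 - β) := by positivity
    have hθ2 : (0:ℝ) ≤ θ ^ 2 := by positivity
    calc θ ^ 2 * |α - β| ≤ θ ^ 2 * ((β - α) ^ 2 / (θ * (β - α) + 1 - β)
          + (θ * (β - α) + α) / (θ * (1 - θ))) := by
          apply mul_le_mul_of_nonneg_left _ hθ2
          linarith
      _ = _ := rfl
  · rw [mul_add]
    rcases le_total α β with h | h
    · rw [max_eq_right h]
      have hA : θ ^ 2 * ((β - α) ^ 2 / (θ * (β - α) + 1 - β)) ≤ θ * (β - α) := by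
        rw [mul_div_assoc', div_le_iff₀ hD]
        nlinarith [mul_nonneg (mul_nonneg hθ0.le (sub_nonneg.mpr h)) (show (0:ℝ) ≤ 1 - β by linarith)]
      have hB : θ ^ 2 * ((θ * (β - α) + α) / (θ * (1 - θ)))
          = θ / (1 - θ) * β - θ * (β - α) := by
        field_simp
        ring
      linarith
    · rw [max_eq_left h]
      have hA : θ ^ 2 * ((β - α) ^ 2 / (θ * (β - α) + 1 - β)) ≤ θ ^ 2 * (α - β) / (1 - θ) := by
        rw [mul_div_assoc', div_le_div_iff₀ hD h1θ]
        nlinarith [mul_nonneg (mul_nonneg (sq_nonneg θ) (sub_nonneg.mpr h)) (show (0:ℝ) ≤ 1 - α by linarith)]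
      have hB : θ ^ 2 * ((θ * (β - α) + α) / (θ * (1 - θ)))
          = θ / (1 - θ) * α - θ ^ 2 * (α - β) / (1 - θ) := by
        field_simp
        ring
      linarith
  · have hm : max α β ≤ 1 := max_le hα1.le hβ1.le
    have : (0:ℝ) ≤ θ / (1 - θ) := by positivity
    nlinarith
end

section
/- Let X follow a hypergeometric distribution Hyper(K, N, N') (the number of blue balls when N' balls are drawn without replacement from a jar of N balls, K of which are blue), and set p = K/N. Then for any 0 < ε < p·N', P[X ≥ (p+ε)·N'] ≤ exp(−2ε²·N'). -/
/-!
Chvátal's argument. The factorial moments `E[C(X, i)] = C(n, i) (K)ᵢ / (N)ᵢ` of the hypergeometric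
variable `X` are at most the binomial ones `C(n, i) pⁱ`. Expanding `yᵗ = ∑ C(t, i) (y - 1)ⁱ`, the
moment generating function of `X` is therefore at most `(1 - p + p e^λ)ⁿ`, which Hoeffding's lemma
for a Bernoulli variable bounds by `exp (n (p λ + λ² / 8))`. The Chernoff bound with `λ = 4ε` then
gives `exp (-2 ε² n)`.
-/

open Finset Real ProbabilityTheory MeasureTheory

theorem Nat.descFactorial_mul_pow_le {K N : ℕ} (hK : K ≤ N) (i : ℕ) :
    K.descFactorial i * N ^ i ≤ N.descFactorial i * K ^ i := by
  induction i with
  | zero => simp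
  | succ i ih =>
    have hstep : (K - i) * N ≤ (N - i) * K := by
      rw [Nat.sub_mul, Nat.sub_mul, Nat.mul_comm K N]
      exact Nat.sub_le_sub_left (Nat.mul_le_mul_left i hK) _
    calc K.descFactorial (i + 1) * N ^ (i + 1)
        = ((K - i) * N) * (K.descFactorial i * N ^ i) := by
          rw [Nat.descFactorial_succ, pow_succ]; ring
      _ ≤ ((N - i) * K) * (N.descFactorial i * K ^ i) := Nat.mul_le_mul hstep ih
      _ = N.descFactorial (i + 1) * K ^ (i + 1) := by
          rw [Nat.descFactorial_succ, pow_succ]; ring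

theorem Nat.choose_mul_pow_le {K N : ℕ} (hK : K ≤ N) (i : ℕ) :
    K.choose i * N ^ i ≤ N.choose i * K ^ i := by
  have h := Nat.descFactorial_mul_pow_le hK i
  rw [Nat.descFactorial_eq_factorial_mul_choose, Nat.descFactorial_eq_factorial_mul_choose,
    mul_assoc, mul_assoc] at h
  exact Nat.le_of_mul_le_mul_left h i.factorial_pos

theorem choose_le_choose_mul_div_pow {K N : ℕ} (hK : K ≤ N) (i : ℕ) :
    (K.choose i : ℝ) ≤ N.choose i * ((K : ℝ) / N) ^ i := by
  rcases Nat.eq_zero_or_pos N with rfl | hN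
  · obtain rfl := Nat.le_zero.mp hK
    cases i <;> simp
  rw [div_pow, mul_div_assoc', le_div_iff₀ (by positivity)]
  exact_mod_cast Nat.choose_mul_pow_le hK i

theorem Nat.sum_range_choose_mul_choose_mul_choose (a b : ℕ) {n i : ℕ} (hi : i ≤ n) :
    ∑ t ∈ range (n + 1), t.choose i * (a.choose t * b.choose (n - t))
      = a.choose i * (a + b - i).choose (n - i) := by
  rcases lt_or_ge a i with hai | hia
  · rw [Nat.choose_eq_zero_of_lt hai, zero_mul]
    refine sum_eq_zero fun t _ => ?_
    rcases lt_or_ge t i with hti | hit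
    · rw [Nat.choose_eq_zero_of_lt hti, zero_mul]
    · rw [Nat.choose_eq_zero_of_lt (hai.trans_le hit), zero_mul, mul_zero]
  rw [show n + 1 = i + (n - i + 1) by omega, sum_range_add,
    sum_eq_zero fun t ht => by rw [Nat.choose_eq_zero_of_lt (mem_range.mp ht), zero_mul],
    zero_add, Nat.sub_add_comm hia, Nat.add_choose_eq,
    Nat.sum_antidiagonal_eq_sum_range_succ_mk, mul_sum]
  refine sum_congr rfl fun s _ => ?_
  rw [show n - (i + s) = n - i - s by omega, ← mul_assoc, mul_comm (Nat.choose _ i),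
    Nat.choose_mul (Nat.le_add_right i s), Nat.add_sub_cancel_left, mul_assoc]

theorem add_one_pow_eq_sum_range_choose_mul {R : Type*} [CommSemiring R] (z : R) {t n : ℕ}
    (ht : t ≤ n) : (z + 1) ^ t = ∑ i ∈ range (n + 1), (t.choose i : R) * z ^ i := by
  rw [add_pow]
  refine sum_subset (range_subset_range.mpr (by omega)) (fun i _ hi => ?_) |>.trans
    (sum_congr rfl fun i _ => by rw [one_pow, mul_one, mul_comm])
  rw [Nat.choose_eq_zero_of_lt (by simpa using hi), Nat.cast_zero, mul_zero]

theorem one_sub_add_mul_exp_le {p : ℝ} (hp₀ : 0 ≤ p) (hp₁ : p ≤ 1) (x : ℝ) :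
    1 - p + p * exp x ≤ exp (p * x + x ^ 2 / 8) := by
  let μ : Measure ℝ := Ber(1, 0, ⟨p, hp₀, hp₁⟩)
  have hμ : ∀ᵐ ω ∂μ, ω ∈ Set.Icc (0 : ℝ) 1 := by
    rw [ae_iff]
    exact bernoulliMeasure_apply_of_notMem_of_notMem _ measurableSet_Icc.compl (by simp) (by simp)
  have hmgf := (hasSubgaussianMGF_of_mem_Icc measurable_id.aemeasurable hμ).mgf_le x
  have hmean : μ[id] = p := by simp [μ, integral_bernoulliMeasure]
  simp only [mgf, hmean, integral_bernoulliMeasure, μ] at hmgf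
  norm_num at hmgf
  calc 1 - p + p * exp x
      = exp (p * x) * (p * exp (x * (1 - p)) + (1 - p) * exp (-(x * p))) := by
        rw [mul_add, mul_left_comm, ← exp_add, mul_left_comm, ← exp_add]
        ring_nf
        rw [exp_zero]
        ring
    _ ≤ exp (p * x) * exp (1 / 4 * x ^ 2 / 2) := by gcongr
    _ = exp (p * x + x ^ 2 / 8) := by rw [← exp_add]; ring_nf

theorem Finset.sum_filter_le_le_exp_mul_sum_exp {ι : Type*} (s : Finset ι) (f w : ι → ℝ)
    (hw : ∀ i ∈ s, 0 ≤ w i) (a : ℝ) {r : ℝ} (hr : 0 ≤ r) :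
    ∑ i ∈ s with a ≤ f i, w i ≤ exp (-(r * a)) * ∑ i ∈ s, exp (r * f i) * w i := by
  rw [mul_sum]
  calc ∑ i ∈ s with a ≤ f i, w i
      ≤ ∑ i ∈ s with a ≤ f i, exp (-(r * a)) * (exp (r * f i) * w i) := by
        refine sum_le_sum fun i hi => ?_
        obtain ⟨hi, hfi⟩ := mem_filter.mp hi
        rw [← mul_assoc, ← exp_add]
        exact le_mul_of_one_le_left (hw i hi) (one_le_exp (by nlinarith))
    _ ≤ ∑ i ∈ s, exp (-(r * a)) * (exp (r * f i) * w i) :=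
        sum_le_sum_of_subset_of_nonneg (filter_subset _ _)
          fun i hi _ => by have := hw i hi; positivity

noncomputable def hypergeometricProb (K N n t : ℕ) : ℝ :=
  K.choose t * (N - K).choose (n - t) / N.choose n

section Hypergeometric

variable {K N : ℕ} (n : ℕ)

theorem hypergeometricProb_nonneg (t : ℕ) : 0 ≤ hypergeometricProb K N n t := by
  unfold hypergeometricProb; positivity

theorem sum_choose_mul_hypergeometricProb_le (hK : K ≤ N) {i : ℕ} (hi : i ≤ n) :
    ∑ t ∈ range (n + 1), (t.choose i : ℝ) * hypergeometricProb K N n t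
      ≤ n.choose i * ((K : ℝ) / N) ^ i := by
  have hmoment : ∑ t ∈ range (n + 1), (t.choose i : ℝ) * hypergeometricProb K N n t
      = K.choose i * (K + (N - K) - i).choose (n - i) / N.choose n := by
    simp only [hypergeometricProb, mul_div_assoc', ← sum_div]
    exact_mod_cast congrArg (fun m : ℕ => (m : ℝ) / N.choose n)
      (Nat.sum_range_choose_mul_choose_mul_choose K (N - K) hi)
  have hpascal : (N.choose i : ℝ) * (N - i).choose (n - i) = N.choose n * n.choose i := by
    exact_mod_cast (Nat.choose_mul hi).symm
  rw [hmoment]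
  refine div_le_of_le_mul₀ (by positivity) (by positivity) ?_
  calc (K.choose i : ℝ) * (K + (N - K) - i).choose (n - i)
      ≤ N.choose i * ((K : ℝ) / N) ^ i * (N - i).choose (n - i) := by
        rw [Nat.add_sub_cancel' hK]
        gcongr
        exact choose_le_choose_mul_div_pow hK i
    _ = n.choose i * ((K : ℝ) / N) ^ i * N.choose n := by
        rw [mul_right_comm, hpascal]; ring

theorem sum_pow_mul_hypergeometricProb_le (hK : K ≤ N) {y : ℝ} (hy : 1 ≤ y) :
    ∑ t ∈ range (n + 1), y ^ t * hypergeometricProb K N n t ≤ (1 + K / N * (y - 1)) ^ n := by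
  calc ∑ t ∈ range (n + 1), y ^ t * hypergeometricProb K N n t
      = ∑ t ∈ range (n + 1), ∑ i ∈ range (n + 1),
          (y - 1) ^ i * ((t.choose i : ℝ) * hypergeometricProb K N n t) := by
        refine sum_congr rfl fun t ht => ?_
        rw [← sub_add_cancel y 1, add_one_pow_eq_sum_range_choose_mul _ (mem_range_succ_iff.mp ht),
          sum_mul, add_sub_cancel_right]
        exact sum_congr rfl fun i _ => by ring
    _ = ∑ i ∈ range (n + 1), (y - 1) ^ i *
          ∑ t ∈ range (n + 1), (t.choose i : ℝ) * hypergeometricProb K N n t := by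
        rw [sum_comm]; simp only [mul_sum]
    _ ≤ ∑ i ∈ range (n + 1), (y - 1) ^ i * (n.choose i * ((K : ℝ) / N) ^ i) :=
        sum_le_sum fun i hi => mul_le_mul_of_nonneg_left
          (sum_choose_mul_hypergeometricProb_le n hK (mem_range_succ_iff.mp hi))
          (pow_nonneg (sub_nonneg.mpr hy) i)
    _ = (1 + K / N * (y - 1)) ^ n := by
        rw [add_comm 1, add_pow]
        exact sum_congr rfl fun i _ => by rw [one_pow, mul_pow]; ring

theorem sum_exp_mul_hypergeometricProb_le (hK : K ≤ N) {r : ℝ} (hr : 0 ≤ r) :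
    ∑ t ∈ range (n + 1), exp (r * t) * hypergeometricProb K N n t
      ≤ exp (n * ((K : ℝ) / N * r + r ^ 2 / 8)) := by
  have hp₀ : 0 ≤ (K : ℝ) / N := by positivity
  have hp₁ : (K : ℝ) / N ≤ 1 := div_le_one_of_le₀ (by exact_mod_cast hK) (Nat.cast_nonneg N)
  calc ∑ t ∈ range (n + 1), exp (r * t) * hypergeometricProb K N n t
      = ∑ t ∈ range (n + 1), exp r ^ t * hypergeometricProb K N n t := by
        simp only [← exp_nat_mul, mul_comm r]
    _ ≤ (1 - K / N + K / N * exp r) ^ n := by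
        convert sum_pow_mul_hypergeometricProb_le n hK (one_le_exp hr) using 2; ring
    _ ≤ exp (K / N * r + r ^ 2 / 8) ^ n :=
        pow_le_pow_left₀ (by nlinarith [exp_pos r]) (one_sub_add_mul_exp_le hp₀ hp₁ r) n
    _ = exp (n * ((K : ℝ) / N * r + r ^ 2 / 8)) := (exp_nat_mul _ n).symm

end Hypergeometric

theorem hypergeometric_tail_bound_general (K N N' : ℕ) (hK : K ≤ N) (ε : ℝ) (hε : 0 < ε) :
    ∑ t ∈ (Finset.range (N' + 1)).filter
        (fun t : ℕ => ((K : ℝ) / N + ε) * N' ≤ (t : ℝ)),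
      ((K.choose t : ℝ) * ((N - K).choose (N' - t) : ℝ) / (N.choose N' : ℝ))
      ≤ Real.exp (-2 * ε ^ 2 * N') := by
  calc _ ≤ exp (-(4 * ε * (((K : ℝ) / N + ε) * N'))) *
        ∑ t ∈ range (N' + 1), exp (4 * ε * t) * hypergeometricProb K N N' t :=
        sum_filter_le_le_exp_mul_sum_exp _ _ _ (fun t _ => hypergeometricProb_nonneg N' t) _
          (by positivity)
    _ ≤ exp (-(4 * ε * (((K : ℝ) / N + ε) * N'))) *
        exp (N' * ((K : ℝ) / N * (4 * ε) + (4 * ε) ^ 2 / 8)) := by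
        gcongr
        exact sum_exp_mul_hypergeometricProb_le N' hK (by positivity)
    _ = exp (-2 * ε ^ 2 * N') := by rw [← exp_add]; ring_nf

/-- Hoeffding's tail bound for the hypergeometric distribution
`Hyper(K, N, N')`: drawing `N'` balls without replacement from a jar of `N`
balls, `K` of which are blue, with `P[X = t] = C(K,t)·C(N−K,N'−t)/C(N,N')`,
and `p = K/N`, for any `0 < ε < p·N'` we have
`P[X ≥ (p+ε)·N'] ≤ exp(−2ε²·N')`. -/
theorem hypergeometric_tail_bound (K N N' : ℕ) (hK : K ≤ N) (hN' : N' ≤ N)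
    (hN : 0 < N) (ε : ℝ) (hε : 0 < ε) (hεp : ε < (K : ℝ) / N * N') :
    ∑ t ∈ (Finset.range (N' + 1)).filter
        (fun t : ℕ => ((K : ℝ) / N + ε) * N' ≤ (t : ℝ)),
      ((K.choose t : ℝ) * ((N - K).choose (N' - t) : ℝ) / (N.choose N' : ℝ))
      ≤ Real.exp (-2 * ε ^ 2 * N') :=
  hypergeometric_tail_bound_general K N N' hK ε hε
end

section
/- If θ·S₁ is a positive integer with θ ∈ (0,1), then for any 0 < ε < θ²·S₁, the hypergeometric tail sum satisfies: ∑_{t ≥ (θ+ε)·θ·S₁} C(θS₁, t)·C(S₁−θS₁, θS₁−t) / C(S₁, θS₁) ≤ exp(−2ε²·θ·S₁). -/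
/-!
The sum is the upper tail of the hypergeometric law of the number of marked balls in a sample of
`m` drawn from `S₁` balls of which `m` are marked. For `x ≥ 1` its generating function is
dominated by that of the binomial law `Bin(m, θ)`, `θ = m / S₁`. This goes by induction on the
sample size, through the three-term recurrence of the generating functions and Chebyshev's sum
inequality, which shows that tilting the hypergeometric weights by the increasing `x ^ t` does not
lower their mean. The Chernoff bound with `x = exp λ` and Hoeffding's lemma for a Bernoulli
variable then give `exp (m (λ² / 8 - λ ε))`, which is `exp (-2 ε² m)` at the minimiser
`λ = 4 ε`.
-/

open Finset

theorem MonovaryOn.sum_mul_sum_le_sum_mul_sum {ι : Type*} {s : Finset ι} {w f g : ι → ℝ}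
    (hw : ∀ i ∈ s, 0 ≤ w i) (hfg : MonovaryOn f g s) :
    (∑ i ∈ s, w i * f i) * (∑ i ∈ s, w i * g i) ≤
      (∑ i ∈ s, w i) * ∑ i ∈ s, w i * (f i * g i) := by
  have hpairs : 0 ≤ ∑ i ∈ s, ∑ j ∈ s, w i * w j * ((f j - f i) * (g j - g i)) :=
    sum_nonneg fun i hi ↦ sum_nonneg fun j hj ↦
      mul_nonneg (mul_nonneg (hw i hi) (hw j hj)) (hfg.sub_mul_sub_nonneg hi hj)
  have hexpand : ∑ i ∈ s, ∑ j ∈ s, w i * w j * ((f j - f i) * (g j - g i)) =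
      ∑ i ∈ s, ∑ j ∈ s, (w i * (w j * (f j * g j)) + w i * (f i * g i) * w j
        - w i * f i * (w j * g j) - w i * g i * (w j * f j)) :=
    sum_congr rfl fun _ _ ↦ sum_congr rfl fun _ _ ↦ by ring
  simp only [hexpand, sum_add_distrib, sum_sub_distrib, ← sum_mul_sum] at hpairs
  linarith

theorem Finset.sum_filter_ge_le_exp_mul_sum {ι : Type*} {s : Finset ι} {w f : ι → ℝ}
    {c l : ℝ} (hw : ∀ i ∈ s, 0 ≤ w i) (hl : 0 ≤ l) :
    ∑ i ∈ s with c ≤ f i, w i ≤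
      Real.exp (-(l * c)) * ∑ i ∈ s, w i * Real.exp (l * f i) := by
  rw [mul_sum]
  calc ∑ i ∈ s with c ≤ f i, w i
      ≤ ∑ i ∈ s with c ≤ f i, Real.exp (-(l * c)) * (w i * Real.exp (l * f i)) := by
        refine sum_le_sum fun i hi ↦ ?_
        obtain ⟨his, hci⟩ := mem_filter.mp hi
        rw [mul_left_comm, ← Real.exp_add]
        exact le_mul_of_one_le_right (hw i his)
          (Real.one_le_exp (by linarith [mul_le_mul_of_nonneg_left hci hl]))
    _ ≤ ∑ i ∈ s, Real.exp (-(l * c)) * (w i * Real.exp (l * f i)) :=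
        sum_le_sum_of_subset_of_nonneg (filter_subset _ _) fun i his _ ↦
          mul_nonneg (Real.exp_nonneg _) (mul_nonneg (hw i his) (Real.exp_nonneg _))

open ProbabilityTheory MeasureTheory unitInterval in
theorem one_sub_add_mul_exp_le_exp (p : I) (s : ℝ) :
    1 - p + p * Real.exp s ≤ Real.exp (p * s + s ^ 2 / 8) := by
  have hsupp : ∀ᵐ z ∂Ber((1 : ℝ), 0, p), z ∈ Set.Icc 0 1 := by
    rw [ae_iff]
    exact bernoulliMeasure_apply_of_notMem_of_notMem p measurableSet_Icc.compl (by simp) (by simp)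
  have hmean : ∫ z, id z ∂Ber((1 : ℝ), 0, p) = p := by simp [integral_bernoulliMeasure]
  have hHoeffding := (hasSubgaussianMGF_of_mem_Icc aemeasurable_id hsupp).mgf_le s
  rw [hmean] at hHoeffding
  simp only [mgf, integral_bernoulliMeasure, id, smul_eq_mul] at hHoeffding
  have hone : Real.exp (p * s) * Real.exp (s * (1 - p)) = Real.exp s := by
    rw [← Real.exp_add]; ring_nf
  have hzero : Real.exp (p * s) * Real.exp (s * (0 - p)) = 1 := by
    rw [← Real.exp_add, ← Real.exp_zero]; ring_nf
  calc 1 - p + p * Real.exp s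
      = Real.exp (p * s) * (p * Real.exp (s * (1 - p)) + (1 - p) * Real.exp (s * (0 - p))) := by
        linear_combination (-(p : ℝ)) * hone - (1 - p) * hzero
    _ ≤ Real.exp (p * s) *
          Real.exp (((‖(1 : ℝ) - 0‖₊ / 2) ^ 2 : NNReal) * s ^ 2 / 2) := by
        gcongr
    _ = Real.exp (p * s + s ^ 2 / 8) := by
        rw [← Real.exp_add]; norm_num; ring

namespace Nat

theorem sum_range_choose_mul_choose (K L n : ℕ) :
    ∑ t ∈ range (n + 1), K.choose t * L.choose (n - t) = (K + L).choose n := by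
  rw [add_choose_eq, Finset.Nat.sum_antidiagonal_eq_sum_range_succ_mk]

theorem add_mul_sum_range_choose_mul_choose_mul (K L n : ℕ) :
    (K + L) * ∑ t ∈ range (n + 1), K.choose t * L.choose (n - t) * t =
      K * n * (K + L).choose n := by
  rcases n with _ | n
  · simp
  rcases K with _ | K
  · simp [sum_range_succ', choose_zero_succ]
  have hshift : ∑ t ∈ range (n + 2), (K + 1).choose t * L.choose (n + 1 - t) * t =
      (K + 1) * (K + L).choose n := by
    rw [sum_range_succ', mul_zero, add_zero, ← sum_range_choose_mul_choose, mul_sum]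
    refine sum_congr rfl fun s _ ↦ ?_
    rw [Nat.add_sub_add_right, mul_right_comm, ← add_one_mul_choose_eq, mul_assoc]
  rw [hshift, add_right_comm, mul_left_comm, add_one_mul_choose_eq]
  ring

theorem cast_add_one_mul_choose_succ (K s : ℕ) :
    ((s : ℝ) + 1) * K.choose (s + 1) = (K - s) * K.choose s := by
  rcases le_or_gt s K with hsK | hKs
  · have h := congrArg (Nat.cast (R := ℝ)) (choose_succ_right_eq K s)
    push_cast [hsK] at h
    linear_combination h
  · simp [choose_eq_zero_of_lt hKs, choose_eq_zero_of_lt (hKs.trans (lt_add_one s))]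

end Nat

theorem succ_mul_sum_range_choose_mul_choose_mul_pow (K L n : ℕ) (x : ℝ) :
    (n + 1) * ∑ t ∈ range (n + 2), (K.choose t * L.choose (n + 1 - t) : ℝ) * x ^ t =
      (K * x + L - n) * ∑ t ∈ range (n + 1), (K.choose t * L.choose (n - t) : ℝ) * x ^ t -
        (x - 1) * ∑ t ∈ range (n + 1), (K.choose t * L.choose (n - t) : ℝ) * (t * x ^ t) := by
  have hlower : ∑ t ∈ range (n + 2), t * (K.choose t * L.choose (n + 1 - t) : ℝ) * x ^ t =
      ∑ t ∈ range (n + 1), (K - t) * x * (K.choose t * L.choose (n - t) : ℝ) * x ^ t := by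
    rw [sum_range_succ', Nat.cast_zero, zero_mul, zero_mul, add_zero]
    refine sum_congr rfl fun t _ ↦ ?_
    rw [Nat.add_sub_add_right, pow_succ]
    push_cast
    linear_combination (L.choose (n - t) * x ^ t * x : ℝ) * Nat.cast_add_one_mul_choose_succ K t
  have hupper :
      ∑ t ∈ range (n + 2), (n + 1 - t) * (K.choose t * L.choose (n + 1 - t) : ℝ) * x ^ t =
        ∑ t ∈ range (n + 1), (L - n + t) * (K.choose t * L.choose (n - t) : ℝ) * x ^ t := by
    rw [sum_range_succ, Nat.cast_add_one, sub_self, zero_mul, zero_mul, add_zero]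
    refine sum_congr rfl fun t ht ↦ ?_
    have htn : t ≤ n := Nat.lt_succ_iff.mp (mem_range.mp ht)
    have h := Nat.cast_add_one_mul_choose_succ L (n - t)
    rw [Nat.cast_sub htn] at h
    rw [Nat.sub_add_comm htn]
    linear_combination (K.choose t * x ^ t : ℝ) * h
  calc (n + 1) * ∑ t ∈ range (n + 2), (K.choose t * L.choose (n + 1 - t) : ℝ) * x ^ t
      = ∑ t ∈ range (n + 2), t * (K.choose t * L.choose (n + 1 - t) : ℝ) * x ^ t +
          ∑ t ∈ range (n + 2),
            (n + 1 - t) * (K.choose t * L.choose (n + 1 - t) : ℝ) * x ^ t := by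
        rw [mul_sum, ← sum_add_distrib]
        exact sum_congr rfl fun _ _ ↦ by ring
    _ = _ := by
        rw [hlower, hupper, mul_sum, mul_sum, ← sum_add_distrib, ← sum_sub_distrib]
        exact sum_congr rfl fun _ _ ↦ by ring

section HypergeometricGeneratingFunction

variable {K L n : ℕ} {x : ℝ}

theorem mul_mul_sum_range_choose_mul_choose_mul_pow_le (hn : n ≤ K + L) (hx : 1 ≤ x) :
    K * n * ∑ t ∈ range (n + 1), (K.choose t * L.choose (n - t) : ℝ) * x ^ t ≤
      (K + L) * ∑ t ∈ range (n + 1), (K.choose t * L.choose (n - t) : ℝ) * (t * x ^ t) := by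
  have hcheb := MonovaryOn.sum_mul_sum_le_sum_mul_sum (s := range (n + 1))
    (w := fun t ↦ (K.choose t * L.choose (n - t) : ℝ)) (f := Nat.cast)
    (g := (x ^ ·)) (fun t _ ↦ by positivity)
    ((Nat.mono_cast.monovary (pow_right_mono₀ hx)).monovaryOn _)
  have hmean := congrArg (Nat.cast (R := ℝ)) (Nat.add_mul_sum_range_choose_mul_choose_mul K L n)
  have htotal := congrArg (Nat.cast (R := ℝ)) (Nat.sum_range_choose_mul_choose K L n)
  push_cast at hmean htotal
  rw [htotal] at hcheb
  have hpos : (0 : ℝ) < (K + L).choose n := by exact_mod_cast Nat.choose_pos hn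
  refine le_of_mul_le_mul_left ?_ hpos
  calc ((K + L).choose n : ℝ) *
        (K * n * ∑ t ∈ range (n + 1), (K.choose t * L.choose (n - t) : ℝ) * x ^ t)
      = (K + L) * ((∑ t ∈ range (n + 1), (K.choose t * L.choose (n - t) : ℝ) * t) *
          ∑ t ∈ range (n + 1), (K.choose t * L.choose (n - t) : ℝ) * x ^ t) := by
        rw [← mul_assoc (K + L : ℝ), hmean]; ring
    _ ≤ (K + L) * ((K + L).choose n *
          ∑ t ∈ range (n + 1), (K.choose t * L.choose (n - t) : ℝ) * (t * x ^ t)) := by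
        gcongr
    _ = _ := by ring

theorem pow_mul_sum_range_choose_mul_choose_mul_pow_le (hn : n ≤ K + L) (hx : 1 ≤ x) :
    ((K : ℝ) + L) ^ n * ∑ t ∈ range (n + 1), (K.choose t * L.choose (n - t) : ℝ) * x ^ t ≤
      (K + L).choose n * (K + L + K * (x - 1)) ^ n := by
  induction n with
  | zero => simp
  | succ n ih =>
    set c : ℝ := K + L + K * (x - 1)
    have hc : 0 ≤ c := add_nonneg (by positivity) (mul_nonneg K.cast_nonneg (sub_nonneg.mpr hx))
    have hnN : (n : ℝ) ≤ K + L := by exact_mod_cast (n.le_succ.trans hn)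
    have hrec := succ_mul_sum_range_choose_mul_choose_mul_pow K L n x
    have hcheb := mul_mul_sum_range_choose_mul_choose_mul_pow_le (L := L) (n.le_succ.trans hn) hx
    have hchoose := Nat.cast_add_one_mul_choose_succ (K + L) n
    push_cast at hchoose
    set H := ∑ t ∈ range (n + 1), (K.choose t * L.choose (n - t) : ℝ) * x ^ t
    set H' := ∑ t ∈ range (n + 2), (K.choose t * L.choose (n + 1 - t) : ℝ) * x ^ t
    have hstep : (n + 1) * ((K + L) * H') ≤ (K + L - n) * c * H := by
      linear_combination (K + L) * hrec + mul_le_mul_of_nonneg_left hcheb (sub_nonneg.mpr hx)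
    refine le_of_mul_le_mul_left ?_ (by positivity : (0 : ℝ) < n + 1)
    calc ((n : ℝ) + 1) * (((K : ℝ) + L) ^ (n + 1) * H')
        = ((K : ℝ) + L) ^ n * ((n + 1) * ((K + L) * H')) := by ring
      _ ≤ ((K : ℝ) + L) ^ n * ((K + L - n) * c * H) := by gcongr
      _ = (K + L - n) * c * (((K : ℝ) + L) ^ n * H) := by ring
      _ ≤ (K + L - n) * c * ((K + L).choose n * c ^ n) :=
          mul_le_mul_of_nonneg_left (ih (n.le_succ.trans hn)) (mul_nonneg (sub_nonneg.mpr hnN) hc)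
      _ = (n + 1) * ((K + L).choose (n + 1) * c ^ (n + 1)) := by
          linear_combination (-c ^ (n + 1)) * hchoose

theorem sum_range_choose_mul_choose_div_mul_pow_le {p : ℝ} (hn : n ≤ K + L)
    (hp : (K : ℝ) = p * (K + L)) (hx : 1 ≤ x) :
    ∑ t ∈ range (n + 1), (K.choose t * L.choose (n - t) / (K + L).choose n : ℝ) * x ^ t ≤
      (1 - p + p * x) ^ n := by
  rcases Nat.eq_zero_or_pos (K + L) with hN | hN
  · obtain rfl : n = 0 := Nat.le_zero.mp (hN ▸ hn)
    simp [hN]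
  have hNpos : (0 : ℝ) < K + L := by exact_mod_cast hN
  have hbound := pow_mul_sum_range_choose_mul_choose_mul_pow_le hn hx
  rw [show (K + L + K * (x - 1) : ℝ) = (K + L) * (1 - p + p * x) by
    linear_combination (x - 1) * hp, mul_pow, mul_left_comm] at hbound
  have hpos : (0 : ℝ) < (K + L).choose n := by exact_mod_cast Nat.choose_pos hn
  simp only [div_mul_eq_mul_div, ← sum_div]
  rw [div_le_iff₀ hpos, mul_comm]
  exact le_of_mul_le_mul_left hbound (by positivity)

end HypergeometricGeneratingFunction

theorem hypergeometric_tail_instantiation_general (S₁ : ℕ)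
    (θ : ℝ) (hθ : 0 < θ) (hθ1 : θ < 1) (m : ℕ) (hm : (m : ℝ) = θ * S₁)
    (ε : ℝ) (hε : 0 < ε) :
    ∑ t ∈ (Finset.range (m + 1)).filter
        (fun t : ℕ => (θ + ε) * θ * S₁ ≤ (t : ℝ)),
      ((m.choose t : ℝ) * ((S₁ - m).choose (m - t) : ℝ) / (S₁.choose m : ℝ))
      ≤ Real.exp (-2 * ε ^ 2 * θ * S₁) := by
  have hmS : m ≤ S₁ := by
    exact_mod_cast hm.trans_le (mul_le_of_le_one_left S₁.cast_nonneg hθ1.le)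
  have hmθ : (m : ℝ) = θ * ((m : ℝ) + (S₁ - m : ℕ)) := by
    rw [Nat.cast_sub hmS, add_sub_cancel, hm]
  have hpgf := sum_range_choose_mul_choose_div_mul_pow_le (L := S₁ - m) (n := m)
    (Nat.le_add_right m _) hmθ (Real.one_le_exp (by positivity : 0 ≤ 4 * ε))
  rw [Nat.add_sub_cancel' hmS] at hpgf
  calc _ ≤ Real.exp (-(4 * ε * ((θ + ε) * θ * S₁))) * ∑ t ∈ range (m + 1),
          (m.choose t * (S₁ - m).choose (m - t) / S₁.choose m : ℝ) * Real.exp (4 * ε * t) :=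
        sum_filter_ge_le_exp_mul_sum (fun t _ ↦ by positivity) (by positivity)
    _ ≤ Real.exp (-(4 * ε * ((θ + ε) * θ * S₁))) *
          (1 - θ + θ * Real.exp (4 * ε)) ^ m := by
        simp only [mul_comm (4 * ε), Real.exp_nat_mul]
        gcongr
    _ ≤ Real.exp (-(4 * ε * ((θ + ε) * θ * S₁))) *
          Real.exp (θ * (4 * ε) + (4 * ε) ^ 2 / 8) ^ m := by
        gcongr
        exact one_sub_add_mul_exp_le_exp ⟨θ, hθ.le, hθ1.le⟩ (4 * ε)
    _ = Real.exp (-2 * ε ^ 2 * θ * S₁) := by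
        rw [← Real.exp_nat_mul, ← Real.exp_add]
        congr 1
        linear_combination (θ * (4 * ε) + (4 * ε) ^ 2 / 8) * hm

/-- Instantiation of the Hoeffding hypergeometric tail bound with parameters
`Hyper(θS₁, S₁, θS₁)`, where `m = θS₁` is a positive integer. -/
theorem hypergeometric_tail_instantiation (S₁ : ℕ) (hS₁ : 0 < S₁)
    (θ : ℝ) (hθ : 0 < θ) (hθ1 : θ < 1) (m : ℕ) (hm : (m : ℝ) = θ * S₁)
    (hmpos : 0 < m) (ε : ℝ) (hε : 0 < ε) (hεθ : ε < θ ^ 2 * S₁) :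
    ∑ t ∈ (Finset.range (m + 1)).filter
        (fun t : ℕ => (θ + ε) * θ * S₁ ≤ (t : ℝ)),
      ((m.choose t : ℝ) * ((S₁ - m).choose (m - t) : ℝ) / (S₁.choose m : ℝ))
      ≤ Real.exp (-2 * ε ^ 2 * θ * S₁) :=
  hypergeometric_tail_instantiation_general S₁ θ hθ hθ1 m hm ε hε
end

section
/- Let L ≥ 2 be an integer, γ ∈ (0,1), α₁ = 1/(2L), α₂ = 1/(L+1), and for α ∈ (0, 1/L] define V_α := ∑_{l=1}^{L} (1/2^{l+1}) · γ^{L−(l−1)}·α/(1−(l−1)α) + (1/2^{L+1}) · α/(1−Lα) + 1/2. Then |V_{α₁} − V_{α₂}| ≥ γ^L·|α₁ − α₂|/2 ≥ γ^L/(12L). -/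
open Finset

/-- `V_α := ∑_{l=1}^{L} (1/2^{l+1}) γ^{L−(l−1)} α/(1−(l−1)α)
      + (1/2^{L+1}) α/(1−Lα) + 1/2` (indexed below by `l' = l−1 ∈ {0,…,L−1}`). -/
noncomputable def Vval (L : ℕ) (γ α : ℝ) : ℝ :=
  (∑ l ∈ Finset.range L,
      (1 / 2 ^ (l + 2)) * (γ ^ (L - l) * α / (1 - l * α)))
    + (1 / 2 ^ (L + 1)) * (α / (1 - L * α)) + 1 / 2

lemma frac_mono {l a b : ℝ} (hl : 0 ≤ l) (ha : 0 ≤ a) (hab : a ≤ b) (hb : l * b < 1) :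
    b - a ≤ b / (1 - l * b) - a / (1 - l * a) := by
  have h1 : 0 < 1 - l * b := by linarith
  have h2 : 0 < 1 - l * a := by nlinarith [mul_le_mul_of_nonneg_left hab hl]
  have key : b / (1 - l * b) - a / (1 - l * a) = (b - a) / ((1 - l * b) * (1 - l * a)) := by
    rw [div_sub_div _ _ h1.ne' h2.ne']; ring
  rw [key, le_div_iff₀ (by positivity)]
  nlinarith [mul_nonneg (mul_nonneg hl ha) h1.le, mul_nonneg hl (ha.trans hab),
    sub_nonneg.mpr hab]

lemma gsum (L : ℕ) : ∑ l ∈ range L, (1 : ℝ) / 2 ^ (l + 2) = 1 / 2 - 1 / 2 ^ (L + 1) := by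
  induction L with
  | zero => simp
  | succ n ih =>
    rw [Finset.sum_range_succ, ih, pow_succ, pow_succ]
    ring

theorem value_gap_bound (L : ℕ) (hL : 2 ≤ L) (γ : ℝ) (hγ0 : 0 < γ)
    (hγ1 : γ < 1) :
    |Vval L γ (1 / (2 * L)) - Vval L γ (1 / (L + 1))|
        ≥ γ ^ L * |(1 : ℝ) / (2 * L) - 1 / (L + 1)| / 2 ∧
      γ ^ L * |(1 : ℝ) / (2 * L) - 1 / (L + 1)| / 2 ≥ γ ^ L / (12 * L) := by
  set d : ℝ := (L : ℝ) with hd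
  have hd2 : (2 : ℝ) ≤ d := by rw [hd]; exact_mod_cast hL
  set a1 : ℝ := 1 / (2 * d) with ha1
  set a2 : ℝ := 1 / (d + 1) with ha2
  have ha1pos : 0 < a1 := by positivity
  have ha2pos : 0 < a2 := by positivity
  have h12 : a1 < a2 := by
    rw [ha1, ha2, div_lt_div_iff₀ (by linarith) (by linarith)]; linarith
  have hγL : 0 < γ ^ L := pow_pos hγ0 L
  have hγL1 : γ ^ L ≤ 1 := pow_le_one₀ hγ0.le hγ1.le
  -- key per-denominator bound
  have key : ∀ r : ℝ, 0 ≤ r → r ≤ d →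
      a2 - a1 ≤ a2 / (1 - r * a2) - a1 / (1 - r * a1) := by
    intro r h0 h1
    apply frac_mono h0 ha1pos.le h12.le
    rw [ha2, mul_one_div, div_lt_one (by linarith)]; linarith
  -- termwise bound
  have hterm : ∀ l ∈ range L,
      (1 / 2 ^ (l + 2)) * γ ^ L * (a2 - a1) ≤
        (1 / 2 ^ (l + 2)) * (γ ^ (L - l) * a2 / (1 - l * a2)) -
          (1 / 2 ^ (l + 2)) * (γ ^ (L - l) * a1 / (1 - l * a1)) := by
    intro l hl
    have hlL : (l : ℝ) ≤ d := by
      rw [hd]; exact_mod_cast (Nat.le_of_lt (Finset.mem_range.mp hl))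
    have hkey := key l (Nat.cast_nonneg l) hlL
    have hγpow : γ ^ L ≤ γ ^ (L - l) :=
      pow_le_pow_of_le_one hγ0.le hγ1.le (Nat.sub_le L l)
    have hγpow0 : 0 < γ ^ (L - l) := pow_pos hγ0 _
    have hrw : (1 / 2 ^ (l + 2) : ℝ) * (γ ^ (L - l) * a2 / (1 - l * a2)) -
        (1 / 2 ^ (l + 2)) * (γ ^ (L - l) * a1 / (1 - l * a1)) =
        (1 / 2 ^ (l + 2)) * γ ^ (L - l) *
          (a2 / (1 - l * a2) - a1 / (1 - l * a1)) := by ring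
    rw [hrw]
    have c0 : (0:ℝ) < 1 / 2 ^ (l + 2) := by positivity
    calc (1 / 2 ^ (l + 2)) * γ ^ L * (a2 - a1)
        ≤ (1 / 2 ^ (l + 2)) * γ ^ (L - l) * (a2 - a1) := by
          apply mul_le_mul_of_nonneg_right _ (by linarith)
          exact mul_le_mul_of_nonneg_left hγpow c0.le
      _ ≤ (1 / 2 ^ (l + 2)) * γ ^ (L - l) *
          (a2 / (1 - l * a2) - a1 / (1 - l * a1)) := by
          exact mul_le_mul_of_nonneg_left hkey (by positivity)
  -- sum bound
  have hsum : γ ^ L * (a2 - a1) * (1 / 2 - 1 / 2 ^ (L + 1)) ≤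
      (∑ l ∈ range L, (1 / 2 ^ (l + 2)) * (γ ^ (L - l) * a2 / (1 - l * a2))) -
        ∑ l ∈ range L, (1 / 2 ^ (l + 2)) * (γ ^ (L - l) * a1 / (1 - l * a1)) := by
    rw [← Finset.sum_sub_distrib]
    calc γ ^ L * (a2 - a1) * (1 / 2 - 1 / 2 ^ (L + 1))
        = ∑ l ∈ range L, (1 / 2 ^ (l + 2)) * γ ^ L * (a2 - a1) := by
          rw [← Finset.sum_mul, ← Finset.sum_mul, gsum]; ring
      _ ≤ _ := Finset.sum_le_sum hterm
  -- last term bound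
  have hlast : γ ^ L * (a2 - a1) * (1 / 2 ^ (L + 1)) ≤
      (1 / 2 ^ (L + 1)) * (a2 / (1 - d * a2)) -
        (1 / 2 ^ (L + 1)) * (a1 / (1 - d * a1)) := by
    have hkey := key d (by linarith) le_rfl
    have c0 : (0:ℝ) < 1 / 2 ^ (L + 1) := by positivity
    calc γ ^ L * (a2 - a1) * (1 / 2 ^ (L + 1))
        ≤ 1 * (a2 - a1) * (1 / 2 ^ (L + 1)) := by
          apply mul_le_mul_of_nonneg_right _ c0.le
          exact mul_le_mul_of_nonneg_right hγL1 (by linarith)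
      _ ≤ (1 / 2 ^ (L + 1)) * (a2 / (1 - d * a2) - a1 / (1 - d * a1)) := by
          rw [one_mul, mul_comm]
          exact mul_le_mul_of_nonneg_left hkey c0.le
      _ = _ := by ring
  have hmain : γ ^ L * (a2 - a1) / 2 ≤ Vval L γ a2 - Vval L γ a1 := by
    unfold Vval
    rw [← hd]
    have : γ ^ L * (a2 - a1) / 2 =
        γ ^ L * (a2 - a1) * (1 / 2 - 1 / 2 ^ (L + 1)) +
          γ ^ L * (a2 - a1) * (1 / 2 ^ (L + 1)) := by ring
    rw [this]
    linarith [hsum, hlast]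
  have habs : |(1 : ℝ) / (2 * d) - 1 / (d + 1)| = a2 - a1 := by
    rw [← ha1, ← ha2, abs_sub_comm, abs_of_nonneg (by linarith)]
  have hV : |Vval L γ a1 - Vval L γ a2| ≥ γ ^ L * (a2 - a1) / 2 := by
    rw [abs_sub_comm]
    exact le_trans hmain (le_abs_self _)
  have h6 : 1 / (6 * d) ≤ a2 - a1 := by
    have e : a2 - a1 - 1 / (6 * d) = (2 * d - 4) / (6 * d * (d + 1)) := by
      rw [ha1, ha2]; field_simp; ring
    have : (0:ℝ) ≤ (2 * d - 4) / (6 * d * (d + 1)) := by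
      apply div_nonneg (by linarith) (by positivity)
    linarith
  constructor
  · rw [habs]; exact hV
  · rw [habs]
    have e2 : γ ^ L / (12 * d) = γ ^ L * (1 / (6 * d)) / 2 := by
      field_simp; ring
    rw [ge_iff_le, e2]
    apply div_le_div_of_nonneg_right _ (by norm_num)
    exact mul_le_mul_of_nonneg_left h6 hγL.le
end
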